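/- Assume 0 < m_0 ≤ M_0 for a fixed vector v ∈ ℝ^d, and suppose there exists R ∈ {k+1,…,N} with ⟨x_R(0), v⟩ = M_0. Set δ⁺₁ := (1/(2(N−1))) (Γ/Λ) (1 − e^{−Λσ}) (M_0/m_0 − 1). Then for all t ∈ [5τ, 6τ], every i = 1,…,N and every j = 1,…,M satisfy ⟨x_i(t), v⟩ ≥ m_0 [ 1 + (1/((M−1)(N+h−1)(M+k−1))) (Γ/Λ)^3 δ⁺₁ e^{−6τΛ} (1 − e^{−Λτ})^3 ] and ⟨y_j(t), v⟩ ≥ m_0 [ 1 + (1/((M−1)(N+h−1)(M+k−1))) (Γ/Λ)^3 δ⁺₁ e^{−6τΛ} (1 − e^{−Λτ})^3 ]. -/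

import Mathlib

open Real Set Filter Topology
open scoped BigOperators RealInnerProductSpace

noncomputable section

/-- `Λ` : the maximum of the sup-norms of the four (positive) influence functions. -/
def Lam {d : ℕ} (ψ ψs φ φs : EuclideanSpace ℝ (Fin d) → EuclideanSpace ℝ (Fin d) → ℝ) : ℝ :=
  max
    (max (⨆ p : EuclideanSpace ℝ (Fin d) × EuclideanSpace ℝ (Fin d), ψ p.1 p.2)
         (⨆ p : EuclideanSpace ℝ (Fin d) × EuclideanSpace ℝ (Fin d), ψs p.1 p.2))
    (max (⨆ p : EuclideanSpace ℝ (Fin d) × EuclideanSpace ℝ (Fin d), φ p.1 p.2)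
         (⨆ p : EuclideanSpace ℝ (Fin d) × EuclideanSpace ℝ (Fin d), φs p.1 p.2))

/-- An influence function is admissible when it is continuous, positive and bounded. -/
def Admissible {d : ℕ} (f : EuclideanSpace ℝ (Fin d) → EuclideanSpace ℝ (Fin d) → ℝ) : Prop :=
  Continuous (fun p : EuclideanSpace ℝ (Fin d) × EuclideanSpace ℝ (Fin d) => f p.1 p.2) ∧
    (∀ z₁ z₂, 0 < f z₁ z₂) ∧
    BddAbove (Set.range fun p : EuclideanSpace ℝ (Fin d) × EuclideanSpace ℝ (Fin d) => f p.1 p.2)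

/-- `(x, y)` is a global classical solution of the two-population delayed
Hegselmann–Krause system, with `k` (resp. `h`) leaders in the first (resp. second)
population and time delay `τ`. -/
structure IsSol {d N M : ℕ} (h k : ℕ) (τ : ℝ)
    (ψ ψs φ φs : EuclideanSpace ℝ (Fin d) → EuclideanSpace ℝ (Fin d) → ℝ)
    (x : Fin N → ℝ → EuclideanSpace ℝ (Fin d))
    (y : Fin M → ℝ → EuclideanSpace ℝ (Fin d)) : Prop where
  contx : ∀ i, Continuous (x i)
  conty : ∀ j, Continuous (y j)
  odex_lead : ∀ i : Fin N, (i : ℕ) < k → ∀ t : ℝ, 0 < t →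
    HasDerivAt (x i)
      ((∑ j ∈ Finset.univ.erase i,
          (ψ (x i t) (x j t) / ((N : ℝ) + h - 1)) • (x j t - x i t)) +
        ∑ j ∈ Finset.univ.filter (fun j : Fin M => (j : ℕ) < h),
          (φ (x i t) (y j (t - τ)) / ((N : ℝ) + h - 1)) • (y j (t - τ) - x i t)) t
  odex_foll : ∀ i : Fin N, k ≤ (i : ℕ) → ∀ t : ℝ, 0 < t →
    HasDerivAt (x i)
      (∑ j ∈ Finset.univ.erase i,
          (ψ (x i t) (x j t) / ((N : ℝ) - 1)) • (x j t - x i t)) t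
  odey_lead : ∀ i : Fin M, (i : ℕ) < h → ∀ t : ℝ, 0 < t →
    HasDerivAt (y i)
      ((∑ j ∈ Finset.univ.erase i,
          (ψs (y i t) (y j t) / ((M : ℝ) + k - 1)) • (y j t - y i t)) +
        ∑ j ∈ Finset.univ.filter (fun j : Fin N => (j : ℕ) < k),
          (φs (y i t) (x j (t - τ)) / ((M : ℝ) + k - 1)) • (x j (t - τ) - y i t)) t
  odey_foll : ∀ i : Fin M, h ≤ (i : ℕ) → ∀ t : ℝ, 0 < t →
    HasDerivAt (y i)
      (∑ j ∈ Finset.univ.erase i,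
          (ψs (y i t) (y j t) / ((M : ℝ) - 1)) • (y j t - y i t)) t

/-- `m_0` : the minimum of the projections on `v` of the initial data. -/
def mInit {d N M : ℕ} (h k : ℕ) (τ : ℝ) (v : EuclideanSpace ℝ (Fin d))
    (x : Fin N → ℝ → EuclideanSpace ℝ (Fin d))
    (y : Fin M → ℝ → EuclideanSpace ℝ (Fin d)) : ℝ :=
  min
    (min (⨅ p : {i : Fin N // (i : ℕ) < k} × (Icc (-τ) (0 : ℝ)), ⟪x p.1.1 (p.2 : ℝ), v⟫)
         (⨅ i : {i : Fin N // k ≤ (i : ℕ)}, ⟪x i.1 0, v⟫))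
    (min (⨅ p : {j : Fin M // (j : ℕ) < h} × (Icc (-τ) (0 : ℝ)), ⟪y p.1.1 (p.2 : ℝ), v⟫)
         (⨅ j : {j : Fin M // h ≤ (j : ℕ)}, ⟪y j.1 0, v⟫))

/-- `M_0` : the maximum of the projections on `v` of the initial data. -/
def MInit {d N M : ℕ} (h k : ℕ) (τ : ℝ) (v : EuclideanSpace ℝ (Fin d))
    (x : Fin N → ℝ → EuclideanSpace ℝ (Fin d))
    (y : Fin M → ℝ → EuclideanSpace ℝ (Fin d)) : ℝ :=
  max
    (max (⨆ p : {i : Fin N // (i : ℕ) < k} × (Icc (-τ) (0 : ℝ)), ⟪x p.1.1 (p.2 : ℝ), v⟫)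
         (⨆ i : {i : Fin N // k ≤ (i : ℕ)}, ⟪x i.1 0, v⟫))
    (max (⨆ p : {j : Fin M // (j : ℕ) < h} × (Icc (-τ) (0 : ℝ)), ⟪y p.1.1 (p.2 : ℝ), v⟫)
         (⨆ j : {j : Fin M // h ≤ (j : ℕ)}, ⟪y j.1 0, v⟫))

/-- `C_0` : the maximum of the norms of the initial data. -/
def Cinit {d N M : ℕ} (h k : ℕ) (τ : ℝ)
    (x : Fin N → ℝ → EuclideanSpace ℝ (Fin d))
    (y : Fin M → ℝ → EuclideanSpace ℝ (Fin d)) : ℝ :=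
  max
    (max (⨆ p : {i : Fin N // (i : ℕ) < k} × (Icc (-τ) (0 : ℝ)), ‖x p.1.1 (p.2 : ℝ)‖)
         (⨆ i : {i : Fin N // k ≤ (i : ℕ)}, ‖x i.1 0‖))
    (max (⨆ p : {j : Fin M // (j : ℕ) < h} × (Icc (-τ) (0 : ℝ)), ‖y p.1.1 (p.2 : ℝ)‖)
         (⨆ j : {j : Fin M // h ≤ (j : ℕ)}, ‖y j.1 0‖))

/-- the minimum of an influence function on the ball of radius `C` (in each variable). -/
def minOnBall {d : ℕ} (C : ℝ)
    (f : EuclideanSpace ℝ (Fin d) → EuclideanSpace ℝ (Fin d) → ℝ) : ℝ :=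
  ⨅ p : {z : EuclideanSpace ℝ (Fin d) × EuclideanSpace ℝ (Fin d) // ‖z.1‖ ≤ C ∧ ‖z.2‖ ≤ C},
    f p.1.1 p.1.2

/-- `Γ := min {ψ₀, ψ*₀, φ₀, φ*₀}`. -/
def Gam {d N M : ℕ} (h k : ℕ) (τ : ℝ)
    (ψ ψs φ φs : EuclideanSpace ℝ (Fin d) → EuclideanSpace ℝ (Fin d) → ℝ)
    (x : Fin N → ℝ → EuclideanSpace ℝ (Fin d))
    (y : Fin M → ℝ → EuclideanSpace ℝ (Fin d)) : ℝ :=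
  min (min (minOnBall (Cinit h k τ x y) ψ) (minOnBall (Cinit h k τ x y) ψs))
      (min (minOnBall (Cinit h k τ x y) φ) (minOnBall (Cinit h k τ x y) φs))

/-- `m_n` : minimum of the projections on `v` over the time mesh `I_n = [(6n-1)τ, 6nτ]`. -/
def mSeq {d N M : ℕ} (h k : ℕ) (τ : ℝ) (v : EuclideanSpace ℝ (Fin d))
    (x : Fin N → ℝ → EuclideanSpace ℝ (Fin d))
    (y : Fin M → ℝ → EuclideanSpace ℝ (Fin d)) (n : ℕ) : ℝ :=
  min
    (min (⨅ p : {i : Fin N // (i : ℕ) < k} × (Icc ((6 * (n : ℝ) - 1) * τ) (6 * (n : ℝ) * τ)),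
            ⟪x p.1.1 (p.2 : ℝ), v⟫)
         (⨅ i : {i : Fin N // k ≤ (i : ℕ)}, ⟪x i.1 (6 * (n : ℝ) * τ), v⟫))
    (min (⨅ p : {j : Fin M // (j : ℕ) < h} × (Icc ((6 * (n : ℝ) - 1) * τ) (6 * (n : ℝ) * τ)),
            ⟪y p.1.1 (p.2 : ℝ), v⟫)
         (⨅ j : {j : Fin M // h ≤ (j : ℕ)}, ⟪y j.1 (6 * (n : ℝ) * τ), v⟫))

/-- `M_n` : maximum of the projections on `v` over the time mesh `I_n = [(6n-1)τ, 6nτ]`. -/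
def MSeq {d N M : ℕ} (h k : ℕ) (τ : ℝ) (v : EuclideanSpace ℝ (Fin d))
    (x : Fin N → ℝ → EuclideanSpace ℝ (Fin d))
    (y : Fin M → ℝ → EuclideanSpace ℝ (Fin d)) (n : ℕ) : ℝ :=
  max
    (max (⨆ p : {i : Fin N // (i : ℕ) < k} × (Icc ((6 * (n : ℝ) - 1) * τ) (6 * (n : ℝ) * τ)),
            ⟪x p.1.1 (p.2 : ℝ), v⟫)
         (⨆ i : {i : Fin N // k ≤ (i : ℕ)}, ⟪x i.1 (6 * (n : ℝ) * τ), v⟫))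
    (max (⨆ p : {j : Fin M // (j : ℕ) < h} × (Icc ((6 * (n : ℝ) - 1) * τ) (6 * (n : ℝ) * τ)),
            ⟪y p.1.1 (p.2 : ℝ), v⟫)
         (⨆ j : {j : Fin M // h ≤ (j : ℕ)}, ⟪y j.1 (6 * (n : ℝ) * τ), v⟫))


/-!
Projected on `v`, every agent relaxes towards (possibly delayed) values of its neighbours, with
nonnegative rates of total at most `Λ`. A first-touching-time argument therefore shows that lower
bounds of `⟪·, w⟫` on the initial history persist for all `t ≥ 0`; with `w = v` this keeps the
solution above `m₀`, and with all `w` it keeps it in the ball of radius `C₀`, where every weight is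
at least `Γ`. Comparison with the linear equation `u' = -Λ (u - m₀) + S` then propagates a gain over
`m₀` along the chain of influence: the follower `x_R`, which starts at `M₀`, stays above the
midpoint up to time `σ` and lifts all followers of the first population; after one delay these lift
its leaders, which lift the leaders of the second population through the delayed coupling, and
those lift its followers. Each link costs a factor `Γ / Λ (1 - e^{-Λτ})` over a normalisation.
-/

theorem sub_mul_lt_of_hasDerivAt_nonneg_at_running_min {ι : Type*} [Finite ι] {u : ι → ℝ → ℝ}
    {c ε : ℝ} (hu : ∀ β, Continuous (u β)) (h0 : ∀ β, c ≤ u β 0)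
    (hder : ∀ β t, 0 < t → u β t ≤ c → (∀ γ, ∀ s ∈ Icc 0 t, u β t ≤ u γ s) →
      ∃ g, HasDerivAt (u β) g t ∧ 0 ≤ g)
    (hε : 0 < ε) (β : ι) {t : ℝ} (ht : 0 ≤ t) : c - ε * (1 + t) < u β t := by
  by_contra! hβt
  set B : ℝ → ℝ := fun s => c - ε * (1 + s) with hB
  set S := {s : ℝ | 0 ≤ s ∧ ∃ γ, u γ s ≤ B s}
  have hS_closed : IsClosed S := by
    have : S = Ici 0 ∩ ⋃ γ, {s | u γ s ≤ B s} := by ext; simp [S]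
    rw [this]
    exact isClosed_Ici.inter (isClosed_iUnion_of_finite fun γ => isClosed_le (hu γ) (by fun_prop))
  have hSbdd : BddBelow S := ⟨0, fun s hs => hs.1⟩
  -- `t₀` is the first time at which some `u γ` touches the barrier `B`
  obtain ⟨ht₀, γ, hγ⟩ : sInf S ∈ S := hS_closed.csInf_mem ⟨t, ht, β, hβt⟩ hSbdd
  set t₀ := sInf S
  have hbefore : ∀ s ∈ Ico 0 t₀, ∀ γ', B s < u γ' s := fun s hs γ' => by
    by_contra! h
    exact (csInf_le hSbdd ⟨hs.1, γ', h⟩).not_gt hs.2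
  have ht₀pos : 0 < t₀ := by
    refine ht₀.lt_of_ne fun h => ?_
    rw [← h] at hγ
    linarith [h0 γ]
  have hall : ∀ γ', ∀ s ∈ Icc 0 t₀, B s ≤ u γ' s := fun γ' s hs =>
    (isClosed_le (by fun_prop) (hu γ')).closure_subset_iff.2 (fun s hs => (hbefore s hs γ').le)
      (by rwa [closure_Ico ht₀pos.ne])
  have heq : u γ t₀ = B t₀ := le_antisymm hγ (hall γ t₀ ⟨ht₀, le_rfl⟩)
  obtain ⟨g, hg, hg0⟩ := hder γ t₀ ht₀pos (by rw [heq, hB]; nlinarith)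
    fun γ' s hs => heq ▸ (by rw [hB]; nlinarith [hs.2] : B t₀ ≤ B s).trans (hall γ' s hs)
  have hBd : HasDerivAt B (-ε) t₀ := by
    simpa using (((hasDerivAt_id t₀).const_add 1).const_mul ε).const_sub c
  have hmin : IsMinOn (fun s => u γ s - B s) (Icc 0 t₀) t₀ := fun s hs => by
    simp only [heq, sub_self, sub_nonneg]
    exact hall γ s hs
  -- a minimum at the right end point forces a nonpositive derivative, but it is `g + ε > 0`
  have := hmin.localize.hasFDerivWithinAt_nonneg (hg.sub hBd).hasDerivWithinAt
    (sub_mem_posTangentConeAt_of_segment_subset (by rw [segment_symm, segment_eq_Icc ht₀]))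
  simp at this
  nlinarith

theorem le_of_hasDerivAt_nonneg_at_running_min {ι : Type*} [Finite ι] {u : ι → ℝ → ℝ} {c : ℝ}
    (hu : ∀ β, Continuous (u β)) (h0 : ∀ β, c ≤ u β 0)
    (hder : ∀ β t, 0 < t → u β t ≤ c → (∀ γ, ∀ s ∈ Icc 0 t, u β t ≤ u γ s) →
      ∃ g, HasDerivAt (u β) g t ∧ 0 ≤ g)
    (β : ι) {t : ℝ} (ht : 0 ≤ t) : c ≤ u β t := by
  refine le_of_forall_pos_lt_add fun δ hδ => ?_
  have := sub_mul_lt_of_hasDerivAt_nonneg_at_running_min hu h0 hder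
    (ε := δ / (1 + t)) (by positivity) β ht
  rw [div_mul_cancel₀ _ (by positivity)] at this
  linarith

theorem monotoneOn_Icc_of_hasDerivAt_nonneg {F : ℝ → ℝ} {a b : ℝ}
    (hF : ContinuousOn F (Icc a b)) (hder : ∀ t ∈ Ioo a b, ∃ g, HasDerivAt F g t ∧ 0 ≤ g) :
    MonotoneOn F (Icc a b) := by
  choose! F' hF' hF'₀ using hder
  refine monotoneOn_of_hasDerivWithinAt_nonneg (f' := F') (convex_Icc a b) hF (fun t ht => ?_)
    fun t ht => ?_
  · rw [interior_Icc] at ht ⊢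
    exact (hF' t ht).hasDerivWithinAt
  · rw [interior_Icc] at ht
    exact hF'₀ t ht

theorem relaxation_le_of_hasDerivAt_ge {u : ℝ → ℝ} {a b L m S : ℝ} (hab : a ≤ b) (hL : 0 < L)
    (hu : ContinuousOn u (Icc a b))
    (hder : ∀ t ∈ Ioo a b, ∃ g, HasDerivAt u g t ∧ -(L * (u t - m)) + S ≤ g) :
    m + (u a - m) * exp (-(L * (b - a))) + S / L * (1 - exp (-(L * (b - a)))) ≤ u b := by
  -- integrating factor
  have hF := monotoneOn_Icc_of_hasDerivAt_nonneg
    (F := fun t => (u t - (m + S / L)) * exp (L * t))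
    ((hu.sub continuousOn_const).mul (by fun_prop)) fun t ht => by
      obtain ⟨g, hg, hgS⟩ := hder t ht
      refine ⟨_, (hg.sub_const _).mul ((hasDerivAt_id t).const_mul L).exp, ?_⟩
      have : 0 ≤ g + L * (u t - m) - S := by linarith
      have hLS : L * (S / L) = S := mul_div_cancel₀ S hL.ne'
      simp only [id_eq, mul_one]
      nlinarith [exp_pos (L * t)]
  have key := hF (left_mem_Icc.2 hab) (right_mem_Icc.2 hab) hab
  simp only at key
  have he : exp (L * a) = exp (-(L * (b - a))) * exp (L * b) := by rw [← exp_add]; ring_nf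
  rw [he, ← mul_assoc] at key
  have := le_of_mul_le_mul_right key (exp_pos _)
  linarith

theorem le_sum_mul_sub {ι : Type*} {s : Finset ι} {c p : ι → ℝ} {q m : ℝ}
    (hc : ∀ r ∈ s, 0 ≤ c r) (hp : ∀ r ∈ s, m ≤ p r) {r₀ : ι} (hr₀ : r₀ ∈ s) :
    c r₀ * (p r₀ - m) - (∑ r ∈ s, c r) * (q - m) ≤ ∑ r ∈ s, c r * (p r - q) := by
  have hsplit : ∑ r ∈ s, c r * (p r - q) =
      ∑ r ∈ s, c r * (p r - m) - (∑ r ∈ s, c r) * (q - m) := by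
    rw [Finset.sum_mul, ← Finset.sum_sub_distrib]
    exact Finset.sum_congr rfl fun r _ => by ring
  rw [hsplit]
  gcongr
  exact Finset.single_le_sum (f := fun r => c r * (p r - m))
    (fun r hr => mul_nonneg (hc r hr) (sub_nonneg.2 (hp r hr))) hr₀

theorem neg_le_sum_mul_sub {ι : Type*} {s : Finset ι} {c p : ι → ℝ} {q m : ℝ}
    (hc : ∀ r ∈ s, 0 ≤ c r) (hp : ∀ r ∈ s, m ≤ p r) :
    -((∑ r ∈ s, c r) * (q - m)) ≤ ∑ r ∈ s, c r * (p r - q) := by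
  rw [neg_le, ← Finset.sum_neg_distrib, Finset.sum_mul]
  exact Finset.sum_le_sum fun r hr => by nlinarith [hc r hr, hp r hr]

theorem sum_div_le_of_card_le {ι : Type*} {s : Finset ι} {f : ι → ℝ} {Λ D : ℝ}
    (hf : ∀ r ∈ s, f r ≤ Λ) (hΛ : 0 ≤ Λ) (hD : (s.card : ℝ) ≤ D) :
    ∑ r ∈ s, f r / D ≤ Λ := by
  rw [← Finset.sum_div]
  refine div_le_of_le_mul₀ ((Nat.cast_nonneg _).trans hD) hΛ ?_
  calc ∑ r ∈ s, f r ≤ s.card • Λ := Finset.sum_le_card_nsmul s f Λ hf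
    _ ≤ Λ * D := by rw [nsmul_eq_mul, mul_comm]; gcongr

structure HasRelaxationDerivAt {ι : Type*} (u : ℝ → ℝ) (Λ : ℝ) (s : Finset ι) (c p : ι → ℝ)
    (t : ℝ) : Prop where
  hasDerivAt : HasDerivAt u (∑ r ∈ s, c r * (p r - u t)) t
  rate_nonneg : ∀ r ∈ s, 0 ≤ c r
  sum_rate_le : ∑ r ∈ s, c r ≤ Λ

namespace HasRelaxationDerivAt

variable {ι : Type*} {u : ℝ → ℝ} {Λ m t : ℝ} {s : Finset ι} {c p : ι → ℝ}

theorem exists_neg_mul_le (H : HasRelaxationDerivAt u Λ s c p t) (hp : ∀ r ∈ s, m ≤ p r)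
    (hu : m ≤ u t) : ∃ g, HasDerivAt u g t ∧ -(Λ * (u t - m)) ≤ g :=
  ⟨_, H.hasDerivAt, by
    nlinarith [neg_le_sum_mul_sub (q := u t) H.rate_nonneg hp, H.sum_rate_le]⟩

theorem exists_neg_mul_add_le (H : HasRelaxationDerivAt u Λ s c p t) (hp : ∀ r ∈ s, m ≤ p r)
    (hu : m ≤ u t) {r₀ : ι} (hr₀ : r₀ ∈ s) :
    ∃ g, HasDerivAt u g t ∧ -(Λ * (u t - m)) + c r₀ * (p r₀ - m) ≤ g :=
  ⟨_, H.hasDerivAt, by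
    nlinarith [le_sum_mul_sub (q := u t) H.rate_nonneg hp hr₀, H.sum_rate_le]⟩

end HasRelaxationDerivAt

theorem add_mul_le_of_forall_hasRelaxationDerivAt {ι : Type*} {u : ℝ → ℝ} {a b T L m γ A : ℝ}
    {s : Finset ι} {c p : ℝ → ι → ℝ} {r₀ : ι} (hT₀ : 0 ≤ T) (hT : T ≤ b - a) (hL : 0 < L)
    (hγ : 0 ≤ γ) (hA : 0 ≤ A) (hu : ContinuousOn u (Icc a b)) (hua : m ≤ u a) (hr₀ : r₀ ∈ s)
    (hrel : ∀ t ∈ Ioo a b, HasRelaxationDerivAt u L s (c t) (p t) t ∧ (∀ r ∈ s, m ≤ p t r) ∧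
      m ≤ u t ∧ γ ≤ c t r₀ ∧ m + A ≤ p t r₀) :
    m + A * (γ / L * (1 - exp (-(L * T)))) ≤ u b := by
  have hab : a ≤ b := by linarith
  have h := relaxation_le_of_hasDerivAt_ge (S := γ * A) hab hL hu fun t ht => by
    obtain ⟨H, hp, hut, hc, hpr₀⟩ := hrel t ht
    obtain ⟨g, hg, hgle⟩ := H.exists_neg_mul_add_le hp hut hr₀
    exact ⟨g, hg, by nlinarith⟩
  have hexp : exp (-(L * (b - a))) ≤ exp (-(L * T)) := exp_le_exp.2 (by nlinarith)
  have : 0 ≤ (u a - m) * exp (-(L * (b - a))) := mul_nonneg (by linarith) (exp_pos _).le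
  have : γ * A / L * (1 - exp (-(L * T))) ≤ γ * A / L * (1 - exp (-(L * (b - a)))) := by
    gcongr
  calc m + A * (γ / L * (1 - exp (-(L * T)))) = m + γ * A / L * (1 - exp (-(L * T))) := by ring
    _ ≤ u b := by linarith

theorem div_mul_one_sub_exp_mem_Icc {Γ Λ T : ℝ} (hΓ : 0 ≤ Γ) (hΓΛ : Γ ≤ Λ) (hΛ : 0 < Λ)
    (hT : 0 ≤ T) : Γ / Λ * (1 - exp (-(Λ * T))) ∈ Icc 0 1 := by
  have he : exp (-(Λ * T)) ≤ 1 := exp_le_one_iff.2 (by nlinarith)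
  exact ⟨mul_nonneg (div_nonneg hΓ hΛ.le) (by linarith),
    mul_le_one₀ ((div_le_one hΛ).2 hΓΛ) (by linarith) (by linarith [exp_pos (-(Λ * T))])⟩

theorem mul_div_mem_Icc {a κ D : ℝ} (ha : 0 ≤ a) (hκ : κ ∈ Icc 0 1) (hD : 1 ≤ D) :
    a * κ / D ∈ Icc 0 a :=
  ⟨div_nonneg (mul_nonneg ha hκ.1) (by linarith),
    div_le_of_le_mul₀ (by linarith) ha (by nlinarith [hκ.1, hκ.2])⟩

theorem mul_min_div_le_half {Λ τ m M : ℝ} (hΛ : 0 < Λ) (hm : 0 < m) (hmM : m ≤ M) :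
    Λ * min τ ((M - m) / (4 * Λ * M)) ≤ 1 / 2 := by
  have hM : 0 < M := hm.trans_le hmM
  calc Λ * min τ ((M - m) / (4 * Λ * M)) ≤ Λ * ((M - m) / (4 * Λ * M)) := by
        gcongr; exact min_le_right _ _
    _ = (M - m) / (4 * M) := by field_simp
    _ ≤ 1 / 2 := by rw [div_le_iff₀ (by positivity)]; linarith

theorem HasDerivAt.inner_sum_smul_sub {E ι : Type*} [NormedAddCommGroup E]
    [InnerProductSpace ℝ E] {X : ℝ → E} {s : Finset ι} {c : ι → ℝ} {z : ι → E} {t : ℝ}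
    (hX : HasDerivAt X (∑ r ∈ s, c r • (z r - X t)) t) (w : E) :
    HasDerivAt (fun t => ⟪X t, w⟫) (∑ r ∈ s, c r * (⟪z r, w⟫ - ⟪X t, w⟫)) t := by
  refine (hX.inner ℝ (hasDerivAt_const t w)).congr_deriv ?_
  simp [sum_inner, real_inner_smul_left, inner_sub_left]

theorem norm_le_of_forall_neg_mul_norm_le_inner {E : Type*} [NormedAddCommGroup E]
    [InnerProductSpace ℝ E] {z : E} {C : ℝ} (hC : 0 ≤ C) (h : ∀ w, -(C * ‖w‖) ≤ ⟪z, w⟫) :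
    ‖z‖ ≤ C := by
  have := h (-z)
  rw [inner_neg_right, real_inner_self_eq_norm_mul_norm, norm_neg] at this
  nlinarith [norm_nonneg z]

theorem isCompact_range_prod_Icc {X : Type*} [TopologicalSpace X] [DiscreteTopology X] [Finite X]
    {f : X → ℝ → ℝ} (hf : ∀ i, Continuous (f i)) (a b : ℝ) :
    IsCompact (range fun p : X × Icc a b => f p.1 p.2) :=
  isCompact_range (continuous_prod_of_discrete_left.2 fun i => (hf i).comp continuous_subtype_val)

local notation "E" d => EuclideanSpace ℝ (Fin d)

def InitialLowerBound {d N M : ℕ} (h k : ℕ) (τ : ℝ) (x : Fin N → ℝ → E d) (y : Fin M → ℝ → E d)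
    (f : (E d) → ℝ) (c : ℝ) : Prop :=
  (∀ i : Fin N, (i : ℕ) < k → ∀ s ∈ Icc (-τ) 0, c ≤ f (x i s)) ∧
    (∀ i : Fin N, k ≤ (i : ℕ) → c ≤ f (x i 0)) ∧
    (∀ j : Fin M, (j : ℕ) < h → ∀ s ∈ Icc (-τ) 0, c ≤ f (y j s)) ∧
    ∀ j : Fin M, h ≤ (j : ℕ) → c ≤ f (y j 0)

theorem InitialLowerBound.mono {d N M h k : ℕ} {τ c c' : ℝ} {x : Fin N → ℝ → E d}
    {y : Fin M → ℝ → E d} {f g : (E d) → ℝ} (H : InitialLowerBound h k τ x y f c)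
    (hfg : ∀ z, c ≤ f z → c' ≤ g z) : InitialLowerBound h k τ x y g c' :=
  ⟨fun i hi s hs => hfg _ (H.1 i hi s hs), fun i hi => hfg _ (H.2.1 i hi),
    fun j hj s hs => hfg _ (H.2.2.1 j hj s hs), fun j hj => hfg _ (H.2.2.2 j hj)⟩

section InitialData

variable {d N M h k : ℕ} {τ : ℝ} {x : Fin N → ℝ → E d} {y : Fin M → ℝ → E d}

theorem initialLowerBound_mInit (hx : ∀ i, Continuous (x i)) (hy : ∀ j, Continuous (y j))
    (v : E d) : InitialLowerBound h k τ x y (fun z => ⟪z, v⟫) (mInit h k τ v x y) := by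
  refine ⟨fun i hi s hs => ?_, fun i hi => ?_, fun j hj s hs => ?_, fun j hj => ?_⟩ <;>
    unfold mInit
  · exact (min_le_left _ _).trans <| (min_le_left _ _).trans <| ciInf_le
      (isCompact_range_prod_Icc (fun i : {i : Fin N // (i : ℕ) < k} =>
        (hx i.1).inner continuous_const) _ _).bddBelow ⟨⟨i, hi⟩, ⟨s, hs⟩⟩
  · exact (min_le_left _ _).trans <| (min_le_right _ _).trans <|
      ciInf_le (f := fun i : {i : Fin N // k ≤ (i : ℕ)} => ⟪x i.1 0, v⟫)
        (Set.finite_range _).bddBelow ⟨i, hi⟩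
  · exact (min_le_right _ _).trans <| (min_le_left _ _).trans <| ciInf_le
      (isCompact_range_prod_Icc (fun j : {j : Fin M // (j : ℕ) < h} =>
        (hy j.1).inner continuous_const) _ _).bddBelow ⟨⟨j, hj⟩, ⟨s, hs⟩⟩
  · exact (min_le_right _ _).trans <| (min_le_right _ _).trans <|
      ciInf_le (f := fun j : {j : Fin M // h ≤ (j : ℕ)} => ⟪y j.1 0, v⟫)
        (Set.finite_range _).bddBelow ⟨j, hj⟩

theorem initialLowerBound_Cinit (hx : ∀ i, Continuous (x i)) (hy : ∀ j, Continuous (y j)) :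
    InitialLowerBound h k τ x y (fun z => -‖z‖) (-Cinit h k τ x y) := by
  refine ⟨fun i hi s hs => ?_, fun i hi => ?_, fun j hj s hs => ?_, fun j hj => ?_⟩ <;>
    simp only [neg_le_neg_iff] <;> unfold Cinit
  · exact (le_ciSup (isCompact_range_prod_Icc (fun i : {i : Fin N // (i : ℕ) < k} =>
      (hx i.1).norm) _ _).bddAbove ⟨⟨i, hi⟩, ⟨s, hs⟩⟩).trans <|
        (le_max_left _ _).trans (le_max_left _ _)
  · exact (le_ciSup (f := fun i : {i : Fin N // k ≤ (i : ℕ)} => ‖x i.1 0‖)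
      (Set.finite_range _).bddAbove ⟨i, hi⟩).trans <|
      (le_max_right _ _).trans (le_max_left _ _)
  · exact (le_ciSup (isCompact_range_prod_Icc (fun j : {j : Fin M // (j : ℕ) < h} =>
      (hy j.1).norm) _ _).bddAbove ⟨⟨j, hj⟩, ⟨s, hs⟩⟩).trans <|
        (le_max_left _ _).trans (le_max_right _ _)
  · exact (le_ciSup (f := fun j : {j : Fin M // h ≤ (j : ℕ)} => ‖y j.1 0‖)
      (Set.finite_range _).bddAbove ⟨j, hj⟩).trans <|
      (le_max_right _ _).trans (le_max_right _ _)

theorem Cinit_nonneg : 0 ≤ Cinit h k τ x y :=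
  le_max_of_le_left <| le_max_of_le_left <| Real.iSup_nonneg fun _ => norm_nonneg _

end InitialData

namespace IsSol

variable {d N M h k : ℕ} {τ Λ : ℝ} {ψ ψs φ φs : (E d) → (E d) → ℝ} {x : Fin N → ℝ → E d}
  {y : Fin M → ℝ → E d}

theorem hasRelaxationDerivAt_x_foll (hsol : IsSol h k τ ψ ψs φ φs x y)
    (hψ : ∀ z₁ z₂, ψ z₁ z₂ ∈ Icc 0 Λ) {i : Fin N} (hi : k ≤ (i : ℕ)) {t : ℝ} (ht : 0 < t)
    (w : E d) :
    HasRelaxationDerivAt (fun s => ⟪x i s, w⟫) Λ (Finset.univ.erase i)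
      (fun r => ψ (x i t) (x r t) / ((N : ℝ) - 1)) (fun r => ⟪x r t, w⟫) t where
  hasDerivAt := (hsol.odex_foll i hi t ht).inner_sum_smul_sub w
  rate_nonneg r _ := div_nonneg (hψ _ _).1 (by simp [Nat.one_le_cast.2 i.pos])
  sum_rate_le := sum_div_le_of_card_le (fun r _ => (hψ _ _).2) ((hψ 0 0).1.trans (hψ 0 0).2)
    (by simp [Finset.card_erase_of_mem, Nat.cast_sub (Nat.one_le_iff_ne_zero.2 i.pos.ne')])

theorem hasRelaxationDerivAt_x_lead (hsol : IsSol h k τ ψ ψs φ φs x y)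
    (hψ : ∀ z₁ z₂, ψ z₁ z₂ ∈ Icc 0 Λ) (hφ : ∀ z₁ z₂, φ z₁ z₂ ∈ Icc 0 Λ) {i : Fin N}
    (hi : (i : ℕ) < k) {t : ℝ} (ht : 0 < t) (w : E d) :
    HasRelaxationDerivAt (fun s => ⟪x i s, w⟫) Λ
      ((Finset.univ.erase i).disjSum (Finset.univ.filter fun j : Fin M => (j : ℕ) < h))
      (fun r => Sum.elim (fun r => ψ (x i t) (x r t)) (fun j => φ (x i t) (y j (t - τ))) r /
        ((N : ℝ) + h - 1))
      (fun r => ⟪Sum.elim (fun r => x r t) (fun j => y j (t - τ)) r, w⟫) t where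
  hasDerivAt := by
    refine HasDerivAt.inner_sum_smul_sub ?_ w
    exact (hsol.odex_lead i hi t ht).congr_deriv (by simp [Finset.sum_disjSum])
  rate_nonneg := by
    have : (0 : ℝ) ≤ (N : ℝ) + h - 1 := by linarith [Nat.one_le_cast (α := ℝ).2 i.pos]
    rintro (r | j) _
    exacts [div_nonneg (hψ _ _).1 this, div_nonneg (hφ _ _).1 this]
  sum_rate_le := by
    refine sum_div_le_of_card_le ?_ ((hψ 0 0).1.trans (hψ 0 0).2) ?_
    · rintro (r | j) _
      exacts [(hψ _ _).2, (hφ _ _).2]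
    · have hh : (Finset.univ.filter fun j : Fin M => (j : ℕ) < h).card ≤ h :=
        Fin.card_filter_val_lt.trans_le (min_le_right _ _)
      rw [Finset.card_disjSum, Finset.card_erase_of_mem (Finset.mem_univ i), Finset.card_univ,
        Fintype.card_fin]
      push_cast [Nat.cast_sub (Nat.one_le_iff_ne_zero.2 i.pos.ne')]
      linarith [(Nat.cast_le (α := ℝ)).2 hh]

theorem hasRelaxationDerivAt_y_foll (hsol : IsSol h k τ ψ ψs φ φs x y)
    (hψs : ∀ z₁ z₂, ψs z₁ z₂ ∈ Icc 0 Λ) {j : Fin M} (hj : h ≤ (j : ℕ)) {t : ℝ} (ht : 0 < t)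
    (w : E d) :
    HasRelaxationDerivAt (fun s => ⟪y j s, w⟫) Λ (Finset.univ.erase j)
      (fun r => ψs (y j t) (y r t) / ((M : ℝ) - 1)) (fun r => ⟪y r t, w⟫) t where
  hasDerivAt := (hsol.odey_foll j hj t ht).inner_sum_smul_sub w
  rate_nonneg r _ := div_nonneg (hψs _ _).1 (by simp [Nat.one_le_cast.2 j.pos])
  sum_rate_le := sum_div_le_of_card_le (fun r _ => (hψs _ _).2) ((hψs 0 0).1.trans (hψs 0 0).2)
    (by simp [Finset.card_erase_of_mem, Nat.cast_sub (Nat.one_le_iff_ne_zero.2 j.pos.ne')])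

theorem hasRelaxationDerivAt_y_lead (hsol : IsSol h k τ ψ ψs φ φs x y)
    (hψs : ∀ z₁ z₂, ψs z₁ z₂ ∈ Icc 0 Λ) (hφs : ∀ z₁ z₂, φs z₁ z₂ ∈ Icc 0 Λ) {j : Fin M}
    (hj : (j : ℕ) < h) {t : ℝ} (ht : 0 < t) (w : E d) :
    HasRelaxationDerivAt (fun s => ⟪y j s, w⟫) Λ
      ((Finset.univ.erase j).disjSum (Finset.univ.filter fun i : Fin N => (i : ℕ) < k))
      (fun r => Sum.elim (fun r => ψs (y j t) (y r t)) (fun i => φs (y j t) (x i (t - τ))) r /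
        ((M : ℝ) + k - 1))
      (fun r => ⟪Sum.elim (fun r => y r t) (fun i => x i (t - τ)) r, w⟫) t where
  hasDerivAt := by
    refine HasDerivAt.inner_sum_smul_sub ?_ w
    exact (hsol.odey_lead j hj t ht).congr_deriv (by simp [Finset.sum_disjSum])
  rate_nonneg := by
    have : (0 : ℝ) ≤ (M : ℝ) + k - 1 := by linarith [Nat.one_le_cast (α := ℝ).2 j.pos]
    rintro (r | i) _
    exacts [div_nonneg (hψs _ _).1 this, div_nonneg (hφs _ _).1 this]
  sum_rate_le := by
    refine sum_div_le_of_card_le ?_ ((hψs 0 0).1.trans (hψs 0 0).2) ?_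
    · rintro (r | i) _
      exacts [(hψs _ _).2, (hφs _ _).2]
    · have hk : (Finset.univ.filter fun i : Fin N => (i : ℕ) < k).card ≤ k :=
        Fin.card_filter_val_lt.trans_le (min_le_right _ _)
      rw [Finset.card_disjSum, Finset.card_erase_of_mem (Finset.mem_univ j), Finset.card_univ,
        Fintype.card_fin]
      push_cast [Nat.cast_sub (Nat.one_le_iff_ne_zero.2 j.pos.ne')]
      linarith [(Nat.cast_le (α := ℝ)).2 hk]

theorem le_inner_of_initialLowerBound (hsol : IsSol h k τ ψ ψs φ φs x y) (hτ : 0 ≤ τ)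
    (hψ : ∀ z₁ z₂, ψ z₁ z₂ ∈ Icc 0 Λ) (hψs : ∀ z₁ z₂, ψs z₁ z₂ ∈ Icc 0 Λ)
    (hφ : ∀ z₁ z₂, φ z₁ z₂ ∈ Icc 0 Λ) (hφs : ∀ z₁ z₂, φs z₁ z₂ ∈ Icc 0 Λ) {w : E d} {c : ℝ}
    (hinit : InitialLowerBound h k τ x y (fun z => ⟪z, w⟫) c) {t : ℝ} (ht : 0 ≤ t) :
    (∀ i, c ≤ ⟪x i t, w⟫) ∧ ∀ j, c ≤ ⟪y j t, w⟫ := by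
  obtain ⟨hxl, hxf, hyl, hyf⟩ := hinit
  have key := le_of_hasDerivAt_nonneg_at_running_min
    (u := Sum.elim (fun i s => ⟪x i s, w⟫) fun j s => ⟪y j s, w⟫) (c := c)
    (by rintro (i | j); exacts [(hsol.contx i).inner continuous_const,
      (hsol.conty j).inner continuous_const])
    (by
      rintro (i | j)
      · rcases lt_or_ge (i : ℕ) k with hi | hi
        exacts [hxl i hi 0 ⟨by linarith, le_rfl⟩, hxf i hi]
      · rcases lt_or_ge (j : ℕ) h with hj | hj
        exacts [hyl j hj 0 ⟨by linarith, le_rfl⟩, hyf j hj])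
    ?_
  · exact ⟨fun i => key (.inl i) ht, fun j => key (.inr j) ht⟩
  -- at a running minimum every agent is pulled towards values above its own
  rintro (i | j) t ht hc hmin
  · have hx : ∀ r, ⟪x i t, w⟫ ≤ ⟪x r t, w⟫ := fun r => hmin (.inl r) t ⟨ht.le, le_rfl⟩
    rcases lt_or_ge (i : ℕ) k with hi | hi
    · simpa using (hsol.hasRelaxationDerivAt_x_lead hψ hφ hi ht w).exists_neg_mul_le
        (m := ⟪x i t, w⟫)
        (by
          rintro (r | j) hr
          · exact hx r
          · rcases le_or_gt 0 (t - τ) with hτt | hτt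
            · exact hmin (.inr j) (t - τ) ⟨hτt, by linarith⟩
            · exact hc.trans (hyl j (by simpa using hr) _ ⟨by linarith, hτt.le⟩)) le_rfl
    · simpa using (hsol.hasRelaxationDerivAt_x_foll hψ hi ht w).exists_neg_mul_le
        (m := ⟪x i t, w⟫) (fun r _ => hx r) le_rfl
  · have hy : ∀ r, ⟪y j t, w⟫ ≤ ⟪y r t, w⟫ := fun r => hmin (.inr r) t ⟨ht.le, le_rfl⟩
    rcases lt_or_ge (j : ℕ) h with hj | hj
    · simpa using (hsol.hasRelaxationDerivAt_y_lead hψs hφs hj ht w).exists_neg_mul_le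
        (m := ⟪y j t, w⟫)
        (by
          rintro (r | i) hr
          · exact hy r
          · rcases le_or_gt 0 (t - τ) with hτt | hτt
            · exact hmin (.inl i) (t - τ) ⟨hτt, by linarith⟩
            · exact hc.trans (hxl i (by simpa using hr) _ ⟨by linarith, hτt.le⟩)) le_rfl
    · simpa using (hsol.hasRelaxationDerivAt_y_foll hψs hj ht w).exists_neg_mul_le
        (m := ⟪y j t, w⟫) (fun r _ => hy r) le_rfl

theorem norm_le_of_initialLowerBound (hsol : IsSol h k τ ψ ψs φ φs x y) (hτ : 0 ≤ τ)
    (hψ : ∀ z₁ z₂, ψ z₁ z₂ ∈ Icc 0 Λ) (hψs : ∀ z₁ z₂, ψs z₁ z₂ ∈ Icc 0 Λ)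
    (hφ : ∀ z₁ z₂, φ z₁ z₂ ∈ Icc 0 Λ) (hφs : ∀ z₁ z₂, φs z₁ z₂ ∈ Icc 0 Λ) {C : ℝ} (hC₀ : 0 ≤ C)
    (hC : InitialLowerBound h k τ x y (fun z => -‖z‖) (-C)) {t : ℝ} (ht : 0 ≤ t) :
    (∀ i, ‖x i t‖ ≤ C) ∧ ∀ j, ‖y j t‖ ≤ C := by
  have key (w : E d) := hsol.le_inner_of_initialLowerBound hτ hψ hψs hφ hφs (t := t)
    (hC.mono (c' := -(C * ‖w‖)) (g := fun z => ⟪z, w⟫) fun z hz => by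
      nlinarith [neg_le_of_abs_le (abs_real_inner_le_norm z w), norm_nonneg w]) ht
  exact ⟨fun i => norm_le_of_forall_neg_mul_norm_le_inner hC₀ fun w => (key w).1 i,
    fun j => norm_le_of_forall_neg_mul_norm_le_inner hC₀ fun w => (key w).2 j⟩

end IsSol

section Weights

variable {d N M h k : ℕ} {τ : ℝ} {ψ ψs φ φs f : (E d) → (E d) → ℝ} {x : Fin N → ℝ → E d}
  {y : Fin M → ℝ → E d}

theorem Admissible.le_iSup (hf : Admissible f) (z₁ z₂ : E d) :
    f z₁ z₂ ≤ ⨆ p : (E d) × (E d), f p.1 p.2 :=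
  le_ciSup hf.2.2 (z₁, z₂)

theorem Admissible.minOnBall_le (hf : Admissible f) {C : ℝ} {z₁ z₂ : E d} (h₁ : ‖z₁‖ ≤ C)
    (h₂ : ‖z₂‖ ≤ C) : minOnBall C f ≤ f z₁ z₂ :=
  ciInf_le (f := fun p : {z : (E d) × (E d) // ‖z.1‖ ≤ C ∧ ‖z.2‖ ≤ C} => f p.1.1 p.1.2)
    ⟨0, by rintro _ ⟨p, rfl⟩; exact (hf.2.1 _ _).le⟩ ⟨(z₁, z₂), h₁, h₂⟩

theorem Admissible.minOnBall_nonneg (hf : Admissible f) (C : ℝ) : 0 ≤ minOnBall C f :=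
  Real.iInf_nonneg (f := fun p : {z : (E d) × (E d) // ‖z.1‖ ≤ C ∧ ‖z.2‖ ≤ C} => f p.1.1 p.1.2)
    fun _ => (hf.2.1 _ _).le

theorem mem_Icc_Lam (hψ : Admissible ψ) (hψs : Admissible ψs) (hφ : Admissible φ)
    (hφs : Admissible φs) :
    (∀ z₁ z₂, ψ z₁ z₂ ∈ Icc 0 (Lam ψ ψs φ φs)) ∧ (∀ z₁ z₂, ψs z₁ z₂ ∈ Icc 0 (Lam ψ ψs φ φs)) ∧
      (∀ z₁ z₂, φ z₁ z₂ ∈ Icc 0 (Lam ψ ψs φ φs)) ∧ ∀ z₁ z₂, φs z₁ z₂ ∈ Icc 0 (Lam ψ ψs φ φs) :=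
  ⟨fun _ _ => ⟨(hψ.2.1 _ _).le,
      (hψ.le_iSup _ _).trans <| (le_max_left _ _).trans (le_max_left _ _)⟩,
    fun _ _ => ⟨(hψs.2.1 _ _).le,
      (hψs.le_iSup _ _).trans <| (le_max_right _ _).trans (le_max_left _ _)⟩,
    fun _ _ => ⟨(hφ.2.1 _ _).le,
      (hφ.le_iSup _ _).trans <| (le_max_left _ _).trans (le_max_right _ _)⟩,
    fun _ _ => ⟨(hφs.2.1 _ _).le,
      (hφs.le_iSup _ _).trans <| (le_max_right _ _).trans (le_max_right _ _)⟩⟩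

theorem Lam_pos (hψ : Admissible ψ) (hψs : Admissible ψs) (hφ : Admissible φ)
    (hφs : Admissible φs) : 0 < Lam ψ ψs φ φs :=
  (hψ.2.1 0 0).trans_le ((mem_Icc_Lam hψ hψs hφ hφs).1 0 0).2

theorem Gam_nonneg (hψ : Admissible ψ) (hψs : Admissible ψs) (hφ : Admissible φ)
    (hφs : Admissible φs) : 0 ≤ Gam h k τ ψ ψs φ φs x y :=
  le_min (le_min (hψ.minOnBall_nonneg _) (hψs.minOnBall_nonneg _))
    (le_min (hφ.minOnBall_nonneg _) (hφs.minOnBall_nonneg _))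

theorem Gam_le_Lam (hψ : Admissible ψ) (hψs : Admissible ψs) (hφ : Admissible φ)
    (hφs : Admissible φs) : Gam h k τ ψ ψs φ φs x y ≤ Lam ψ ψs φ φs := by
  have h0 : ‖(0 : E d)‖ ≤ Cinit h k τ x y := by simpa using Cinit_nonneg
  exact (min_le_left _ _).trans <| (min_le_left _ _).trans <|
    (hψ.minOnBall_le h0 h0).trans ((mem_Icc_Lam hψ hψs hφ hφs).1 0 0).2

end Weights

structure IsConfinedSol {d N M : ℕ} (h k : ℕ) (τ : ℝ) (ψ ψs φ φs : (E d) → (E d) → ℝ)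
    (x : Fin N → ℝ → E d) (y : Fin M → ℝ → E d) (v : E d) (m Γ Λ : ℝ) : Prop where
  isSol : IsSol h k τ ψ ψs φ φs x y
  ψ_mem : ∀ z₁ z₂, ψ z₁ z₂ ∈ Icc 0 Λ
  ψs_mem : ∀ z₁ z₂, ψs z₁ z₂ ∈ Icc 0 Λ
  φ_mem : ∀ z₁ z₂, φ z₁ z₂ ∈ Icc 0 Λ
  φs_mem : ∀ z₁ z₂, φs z₁ z₂ ∈ Icc 0 Λ
  x_ge : ∀ t, 0 ≤ t → ∀ i, m ≤ ⟪x i t, v⟫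
  y_ge : ∀ t, 0 ≤ t → ∀ j, m ≤ ⟪y j t, v⟫
  le_ψ : ∀ t, 0 ≤ t → ∀ i r, Γ ≤ ψ (x i t) (x r t)
  le_ψs : ∀ t, 0 ≤ t → ∀ j r, Γ ≤ ψs (y j t) (y r t)
  le_φs : ∀ t, τ ≤ t → ∀ j i, Γ ≤ φs (y j t) (x i (t - τ))

theorem IsSol.isConfinedSol {d N M h k : ℕ} {τ : ℝ} {ψ ψs φ φs : (E d) → (E d) → ℝ}
    {x : Fin N → ℝ → E d} {y : Fin M → ℝ → E d} (hsol : IsSol h k τ ψ ψs φ φs x y) (hτ : 0 ≤ τ)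
    (hψ : Admissible ψ) (hψs : Admissible ψs) (hφ : Admissible φ) (hφs : Admissible φs)
    (v : E d) :
    IsConfinedSol h k τ ψ ψs φ φs x y v (mInit h k τ v x y) (Gam h k τ ψ ψs φ φs x y)
      (Lam ψ ψs φ φs) := by
  obtain ⟨hψΛ, hψsΛ, hφΛ, hφsΛ⟩ := mem_Icc_Lam hψ hψs hφ hφs
  have hm {t} (ht : 0 ≤ t) := hsol.le_inner_of_initialLowerBound hτ hψΛ hψsΛ hφΛ hφsΛ
    (initialLowerBound_mInit hsol.contx hsol.conty v) ht
  have hC {t} (ht : 0 ≤ t) := hsol.norm_le_of_initialLowerBound hτ hψΛ hψsΛ hφΛ hφsΛ Cinit_nonneg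
    (initialLowerBound_Cinit hsol.contx hsol.conty) ht
  exact
  { isSol := hsol
    ψ_mem := hψΛ
    ψs_mem := hψsΛ
    φ_mem := hφΛ
    φs_mem := hφsΛ
    x_ge := fun t ht => (hm ht).1
    y_ge := fun t ht => (hm ht).2
    le_ψ := fun t ht i r => (min_le_left _ _).trans <| (min_le_left _ _).trans <|
      hψ.minOnBall_le ((hC ht).1 i) ((hC ht).1 r)
    le_ψs := fun t ht j r => (min_le_left _ _).trans <| (min_le_right _ _).trans <|
      hψs.minOnBall_le ((hC ht).2 j) ((hC ht).2 r)
    le_φs := fun t ht j i => (min_le_right _ _).trans <| (min_le_right _ _).trans <|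
      hφs.minOnBall_le ((hC (hτ.trans ht)).2 j) ((hC (sub_nonneg.2 ht)).1 i) }

namespace IsConfinedSol

variable {d N M h k : ℕ} {τ m Γ Λ : ℝ} {ψ ψs φ φs : (E d) → (E d) → ℝ} {x : Fin N → ℝ → E d}
  {y : Fin M → ℝ → E d} {v : E d}

theorem x_foll_decay (H : IsConfinedSol h k τ ψ ψs φ φs x y v m Γ Λ) (hΛ : 0 < Λ) {i : Fin N}
    (hi : k ≤ (i : ℕ)) {a b : ℝ} (ha : 0 ≤ a) (hab : a ≤ b) :
    m + (⟪x i a, v⟫ - m) * exp (-(Λ * (b - a))) ≤ ⟪x i b, v⟫ := by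
  simpa using relaxation_le_of_hasDerivAt_ge (S := 0) hab hΛ
    ((H.isSol.contx i).inner continuous_const).continuousOn fun t ht => by
      have ht₀ : 0 ≤ t := ha.trans ht.1.le
      simpa using (H.isSol.hasRelaxationDerivAt_x_foll H.ψ_mem hi (ha.trans_lt ht.1) v
        ).exists_neg_mul_le (fun r _ => H.x_ge t ht₀ r) (H.x_ge t ht₀ i)

theorem x_foll_ge_of_ge (H : IsConfinedSol h k τ ψ ψs φ φs x y v m Γ Λ) (hΛ : 0 < Λ) (hΓ : 0 ≤ Γ)
    {i r : Fin N} (hi : k ≤ (i : ℕ)) (hri : r ≠ i) {a b T A : ℝ} (ha : 0 ≤ a) (hT₀ : 0 ≤ T)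
    (hT : T ≤ b - a) (hA : 0 ≤ A) (hr : ∀ t ∈ Ioo a b, m + A ≤ ⟪x r t, v⟫) :
    m + A * (Γ / Λ * (1 - exp (-(Λ * T)))) / ((N : ℝ) - 1) ≤ ⟪x i b, v⟫ := by
  have hD : (0 : ℝ) ≤ N - 1 := by simp [Nat.one_le_cast.2 i.pos]
  refine (add_mul_le_of_forall_hasRelaxationDerivAt (γ := Γ / ((N : ℝ) - 1)) (r₀ := r)
    (c := fun t r => ψ (x i t) (x r t) / ((N : ℝ) - 1)) (p := fun t r => ⟪x r t, v⟫) hT₀ hT hΛ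
    (div_nonneg hΓ hD) hA ((H.isSol.contx i).inner continuous_const).continuousOn (H.x_ge a ha i)
    (Finset.mem_erase.2 ⟨hri, Finset.mem_univ _⟩) fun t ht => ?_).trans_eq' (by ring)
  have ht₀ : 0 ≤ t := ha.trans ht.1.le
  exact ⟨H.isSol.hasRelaxationDerivAt_x_foll H.ψ_mem hi (ha.trans_lt ht.1) v,
    fun r _ => H.x_ge t ht₀ r, H.x_ge t ht₀ i, div_le_div_of_nonneg_right (H.le_ψ t ht₀ i r) hD,
    hr t ht⟩

theorem x_lead_ge_of_ge (H : IsConfinedSol h k τ ψ ψs φ φs x y v m Γ Λ) (hΛ : 0 < Λ) (hΓ : 0 ≤ Γ)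
    (hτ : 0 ≤ τ) {i r : Fin N} (hi : (i : ℕ) < k) (hri : r ≠ i) {a b T A : ℝ} (ha : τ ≤ a)
    (hT₀ : 0 ≤ T) (hT : T ≤ b - a) (hA : 0 ≤ A) (hr : ∀ t ∈ Ioo a b, m + A ≤ ⟪x r t, v⟫) :
    m + A * (Γ / Λ * (1 - exp (-(Λ * T)))) / ((N : ℝ) + h - 1) ≤ ⟪x i b, v⟫ := by
  have hD : (0 : ℝ) ≤ N + h - 1 := by linarith [Nat.one_le_cast (α := ℝ).2 i.pos]
  refine (add_mul_le_of_forall_hasRelaxationDerivAt (γ := Γ / ((N : ℝ) + h - 1)) (r₀ := .inl r)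
    (s := (Finset.univ.erase i).disjSum (Finset.univ.filter fun j : Fin M => (j : ℕ) < h))
    (c := fun t r => Sum.elim (fun r => ψ (x i t) (x r t)) (fun j => φ (x i t) (y j (t - τ))) r /
      ((N : ℝ) + h - 1))
    (p := fun t r => ⟪Sum.elim (fun r => x r t) (fun j => y j (t - τ)) r, v⟫) hT₀ hT
    hΛ (div_nonneg hΓ hD) hA ((H.isSol.contx i).inner continuous_const).continuousOn
    (H.x_ge a (hτ.trans ha) i)
    (Finset.inl_mem_disjSum.2 (Finset.mem_erase.2 ⟨hri, Finset.mem_univ _⟩))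
    fun t ht => ?_).trans_eq' (by ring)
  have ht₀ : 0 ≤ t - τ := by linarith [ht.1]
  refine ⟨H.isSol.hasRelaxationDerivAt_x_lead H.ψ_mem H.φ_mem hi (by linarith [ht.1]) v, ?_,
    H.x_ge t (by linarith) i, div_le_div_of_nonneg_right (H.le_ψ t (by linarith) i r) hD, hr t ht⟩
  rintro (r | j) _
  exacts [H.x_ge t (by linarith) r, H.y_ge (t - τ) ht₀ j]

theorem y_lead_ge_of_ge (H : IsConfinedSol h k τ ψ ψs φ φs x y v m Γ Λ) (hΛ : 0 < Λ) (hΓ : 0 ≤ Γ)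
    (hτ : 0 ≤ τ) {j : Fin M} {r : Fin N} (hj : (j : ℕ) < h) (hr : (r : ℕ) < k) {a b T A : ℝ}
    (ha : τ ≤ a) (hT₀ : 0 ≤ T) (hT : T ≤ b - a) (hA : 0 ≤ A)
    (hxr : ∀ t ∈ Ioo a b, m + A ≤ ⟪x r (t - τ), v⟫) :
    m + A * (Γ / Λ * (1 - exp (-(Λ * T)))) / ((M : ℝ) + k - 1) ≤ ⟪y j b, v⟫ := by
  have hD : (0 : ℝ) ≤ M + k - 1 := by linarith [Nat.one_le_cast (α := ℝ).2 j.pos]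
  refine (add_mul_le_of_forall_hasRelaxationDerivAt (γ := Γ / ((M : ℝ) + k - 1)) (r₀ := .inr r)
    (s := (Finset.univ.erase j).disjSum (Finset.univ.filter fun i : Fin N => (i : ℕ) < k))
    (c := fun t r => Sum.elim (fun r => ψs (y j t) (y r t)) (fun i => φs (y j t) (x i (t - τ))) r /
      ((M : ℝ) + k - 1))
    (p := fun t r => ⟪Sum.elim (fun r => y r t) (fun i => x i (t - τ)) r, v⟫) hT₀ hT
    hΛ (div_nonneg hΓ hD) hA ((H.isSol.conty j).inner continuous_const).continuousOn
    (H.y_ge a (hτ.trans ha) j) (Finset.inr_mem_disjSum.2 (by simpa using hr))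
    fun t ht => ?_).trans_eq' (by ring)
  have ht₀ : 0 ≤ t - τ := by linarith [ht.1]
  refine ⟨H.isSol.hasRelaxationDerivAt_y_lead H.ψs_mem H.φs_mem hj (by linarith [ht.1]) v, ?_,
    H.y_ge t (by linarith) j, div_le_div_of_nonneg_right (H.le_φs t (by linarith [ht.1]) j r) hD,
    hxr t ht⟩
  rintro (r | i) _
  exacts [H.y_ge t (by linarith) r, H.x_ge (t - τ) ht₀ i]

theorem y_foll_ge_of_ge (H : IsConfinedSol h k τ ψ ψs φ φs x y v m Γ Λ) (hΛ : 0 < Λ) (hΓ : 0 ≤ Γ)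
    {j r : Fin M} (hj : h ≤ (j : ℕ)) (hrj : r ≠ j) {a b T A : ℝ} (ha : 0 ≤ a) (hT₀ : 0 ≤ T)
    (hT : T ≤ b - a) (hA : 0 ≤ A) (hr : ∀ t ∈ Ioo a b, m + A ≤ ⟪y r t, v⟫) :
    m + A * (Γ / Λ * (1 - exp (-(Λ * T)))) / ((M : ℝ) - 1) ≤ ⟪y j b, v⟫ := by
  have hD : (0 : ℝ) ≤ M - 1 := by simp [Nat.one_le_cast.2 j.pos]
  refine (add_mul_le_of_forall_hasRelaxationDerivAt (γ := Γ / ((M : ℝ) - 1)) (r₀ := r)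
    (c := fun t r => ψs (y j t) (y r t) / ((M : ℝ) - 1)) (p := fun t r => ⟪y r t, v⟫) hT₀ hT hΛ
    (div_nonneg hΓ hD) hA ((H.isSol.conty j).inner continuous_const).continuousOn (H.y_ge a ha j)
    (Finset.mem_erase.2 ⟨hrj, Finset.mem_univ _⟩) fun t ht => ?_).trans_eq' (by ring)
  have ht₀ : 0 ≤ t := ha.trans ht.1.le
  exact ⟨H.isSol.hasRelaxationDerivAt_y_foll H.ψs_mem hj (ha.trans_lt ht.1) v,
    fun r _ => H.y_ge t ht₀ r, H.y_ge t ht₀ j, div_le_div_of_nonneg_right (H.le_ψs t ht₀ j r) hD,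
    hr t ht⟩

theorem x_foll_ge_of_extremal (H : IsConfinedSol h k τ ψ ψs φ φs x y v m Γ Λ) (hΛ : 0 < Λ)
    (hΓ : 0 ≤ Γ) (hΓΛ : Γ ≤ Λ) (hN : 2 ≤ N) {R : Fin N} (hR : k ≤ (R : ℕ))
    (hmR : m ≤ ⟪x R 0, v⟫) {σ : ℝ} (hσ : 0 ≤ σ) (hστ : σ ≤ τ) (hΛσ : Λ * σ ≤ 1 / 2) {i : Fin N}
    (hi : k ≤ (i : ℕ)) {t : ℝ} (ht : t ∈ Icc τ (6 * τ)) :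
    m + (⟪x R 0, v⟫ - m) / 2 * (Γ / Λ * (1 - exp (-(Λ * σ)))) / ((N : ℝ) - 1) *
      exp (-(6 * τ * Λ)) ≤ ⟪x i t, v⟫ := by
  set A₀ := (⟪x R 0, v⟫ - m) / 2 * (Γ / Λ * (1 - exp (-(Λ * σ)))) / ((N : ℝ) - 1)
  have hN' : (1 : ℝ) ≤ N - 1 := by rw [le_sub_iff_add_le]; norm_cast
  have hA₀ : A₀ ∈ Icc 0 ((⟪x R 0, v⟫ - m) / 2) :=
    mul_div_mem_Icc (by linarith) (div_mul_one_sub_exp_mem_Icc hΓ hΓΛ hΛ hσ) hN'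
  -- `Λ σ ≤ 1 / 2` keeps `e^{-Λ s} ≥ 1 / 2` on `[0, σ]`
  have hRmid : ∀ s ∈ Icc 0 σ, m + (⟪x R 0, v⟫ - m) / 2 ≤ ⟪x R s, v⟫ := fun s hs => by
    have hdecay := H.x_foll_decay hΛ hR le_rfl hs.1
    have : 1 / 2 ≤ exp (-(Λ * (s - 0))) := by
      nlinarith [add_one_le_exp (-(Λ * (s - 0))), mul_le_mul_of_nonneg_left hs.2 hΛ.le]
    nlinarith
  have hσi : m + A₀ ≤ ⟪x i σ, v⟫ := by
    rcases eq_or_ne i R with rfl | hiR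
    · linarith [hRmid σ ⟨hσ, le_rfl⟩, hA₀.2]
    · exact H.x_foll_ge_of_ge hΛ hΓ hi hiR.symm le_rfl hσ (by simp) (by linarith)
        fun s hs => hRmid s ⟨hs.1.le, hs.2.le⟩
  have hdecay := H.x_foll_decay hΛ hi hσ (hστ.trans ht.1)
  have hexp : exp (-(6 * τ * Λ)) ≤ exp (-(Λ * (t - σ))) := exp_le_exp.2 (by nlinarith [ht.2])
  nlinarith [mul_le_mul hexp (by linarith : A₀ ≤ ⟪x i σ, v⟫ - m) hA₀.1 (exp_pos _).le]

theorem ge_of_x_foll_ge (H : IsConfinedSol h k τ ψ ψs φ φs x y v m Γ Λ) (hΛ : 0 < Λ) (hΓ : 0 ≤ Γ)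
    (hΓΛ : Γ ≤ Λ) (hτ : 0 < τ) (hk : 1 ≤ k) (hkN : k < N) (hh : 1 ≤ h) (hhM : h < M) {A : ℝ}
    (hA : 0 ≤ A) (hfoll : ∀ i : Fin N, k ≤ (i : ℕ) → ∀ t ∈ Icc τ (6 * τ), m + A ≤ ⟪x i t, v⟫)
    {t : ℝ} (ht : t ∈ Icc (5 * τ) (6 * τ)) :
    let B := A * (Γ / Λ * (1 - exp (-(Λ * τ)))) / ((N : ℝ) + h - 1) *
      (Γ / Λ * (1 - exp (-(Λ * τ)))) / ((M : ℝ) + k - 1) *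
      (Γ / Λ * (1 - exp (-(Λ * τ)))) / ((M : ℝ) - 1)
    (∀ i, m + B ≤ ⟪x i t, v⟫) ∧ ∀ j, m + B ≤ ⟪y j t, v⟫ := by
  intro B
  set κ := Γ / Λ * (1 - exp (-(Λ * τ)))
  have hκ : κ ∈ Icc 0 1 := div_mul_one_sub_exp_mem_Icc hΓ hΓΛ hΛ hτ.le
  have hN : (1 : ℝ) ≤ N + h - 1 := by rw [le_sub_iff_add_le]; norm_cast; omega
  have hMk : (1 : ℝ) ≤ M + k - 1 := by rw [le_sub_iff_add_le]; norm_cast; omega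
  have hM : (1 : ℝ) ≤ M - 1 := by rw [le_sub_iff_add_le]; norm_cast; omega
  obtain ⟨hA₁, hA₁A⟩ := mul_div_mem_Icc hA hκ hN
  obtain ⟨hA₂, hA₂A₁⟩ := mul_div_mem_Icc hA₁ hκ hMk
  obtain ⟨-, hBA₂⟩ := mul_div_mem_Icc hA₂ hκ hM
  have hx_lead : ∀ i : Fin N, (i : ℕ) < k → ∀ t ∈ Icc (2 * τ) (6 * τ),
      m + A * κ / (N + h - 1) ≤ ⟪x i t, v⟫ := fun i hi t ht =>
    H.x_lead_ge_of_ge hΛ hΓ hτ.le hi (r := ⟨k, hkN⟩) (Fin.ne_of_val_ne (by simp; omega)) le_rfl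
      hτ.le (by linarith [ht.1]) hA fun s hs =>
        hfoll ⟨k, hkN⟩ le_rfl s ⟨hs.1.le, by linarith [hs.2, ht.2]⟩
  have hy_lead : ∀ j : Fin M, (j : ℕ) < h → ∀ t ∈ Icc (4 * τ) (6 * τ),
      m + A * κ / (N + h - 1) * κ / (M + k - 1) ≤ ⟪y j t, v⟫ := fun j hj t ht =>
    H.y_lead_ge_of_ge hΛ hΓ hτ.le hj (r := ⟨0, by omega⟩) (by simp; omega) (a := 3 * τ)
      (by linarith) hτ.le (by linarith [ht.1]) hA₁ fun s hs =>
        hx_lead _ (by simp; omega) (s - τ) ⟨by linarith [hs.1], by linarith [hs.2, ht.2]⟩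
  have hy_foll : ∀ j : Fin M, h ≤ (j : ℕ) → m + B ≤ ⟪y j t, v⟫ := fun j hj =>
    H.y_foll_ge_of_ge hΛ hΓ hj (r := ⟨0, by omega⟩) (Fin.ne_of_val_ne (by simp; omega))
      (a := 4 * τ) (by linarith) hτ.le (by linarith [ht.1]) hA₂ fun s hs =>
        hy_lead _ (by simp; omega) s ⟨hs.1.le, hs.2.le.trans ht.2⟩
  refine ⟨fun i => ?_, fun j => ?_⟩
  · rcases lt_or_ge (i : ℕ) k with hi | hi
    · linarith [hx_lead i hi t ⟨by linarith [ht.1], ht.2⟩]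
    · linarith [hfoll i hi t ⟨by linarith [ht.1], ht.2⟩]
  · rcases lt_or_ge (j : ℕ) h with hj | hj
    · linarith [hy_lead j hj t ⟨by linarith [ht.1], ht.2⟩]
    · exact hy_foll j hj

theorem ge_of_extremal_follower (H : IsConfinedSol h k τ ψ ψs φ φs x y v m Γ Λ) (hΛ : 0 < Λ)
    (hΓ : 0 ≤ Γ) (hΓΛ : Γ ≤ Λ) (hτ : 0 < τ) (hN : 2 ≤ N) (hk : 1 ≤ k) (hkN : k < N) (hh : 1 ≤ h)
    (hhM : h < M) {R : Fin N} (hR : k ≤ (R : ℕ)) (hmR : m ≤ ⟪x R 0, v⟫) {σ : ℝ} (hσ : 0 ≤ σ)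
    (hστ : σ ≤ τ) (hΛσ : Λ * σ ≤ 1 / 2) {t : ℝ} (ht : t ∈ Icc (5 * τ) (6 * τ)) :
    let B := (⟪x R 0, v⟫ - m) / 2 * (Γ / Λ * (1 - exp (-(Λ * σ)))) / ((N : ℝ) - 1) *
      exp (-(6 * τ * Λ)) * (Γ / Λ * (1 - exp (-(Λ * τ)))) / ((N : ℝ) + h - 1) *
      (Γ / Λ * (1 - exp (-(Λ * τ)))) / ((M : ℝ) + k - 1) *
      (Γ / Λ * (1 - exp (-(Λ * τ)))) / ((M : ℝ) - 1)
    (∀ i, m + B ≤ ⟪x i t, v⟫) ∧ ∀ j, m + B ≤ ⟪y j t, v⟫ := by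
  have hκ := div_mul_one_sub_exp_mem_Icc hΓ hΓΛ hΛ hσ
  have hN' : (1 : ℝ) ≤ N - 1 := by rw [le_sub_iff_add_le]; norm_cast
  exact H.ge_of_x_foll_ge hΛ hΓ hΓΛ hτ hk hkN hh hhM
    (mul_nonneg (mul_div_mem_Icc (by linarith) hκ hN').1 (exp_pos _).le)
    (fun i hi s hs => H.x_foll_ge_of_extremal hΛ hΓ hΓΛ hN hR hmR hσ hστ hΛσ hi hs) ht

end IsConfinedSol

theorem stmt11_general
    (d N M h k : ℕ) (hN : 2 ≤ N)
    (hh1 : 1 ≤ h) (hhM : h < M) (hk1 : 1 ≤ k) (hkN : k < N)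
    (τ : ℝ) (hτ : 0 < τ)
    (ψ ψs φ φs : EuclideanSpace ℝ (Fin d) → EuclideanSpace ℝ (Fin d) → ℝ)
    (hψ : Admissible ψ) (hψs : Admissible ψs) (hφ : Admissible φ) (hφs : Admissible φs)
    (x : Fin N → ℝ → EuclideanSpace ℝ (Fin d)) (y : Fin M → ℝ → EuclideanSpace ℝ (Fin d))
    (hsol : IsSol h k τ ψ ψs φ φs x y)
    (v : EuclideanSpace ℝ (Fin d)) (Λ Γ m₀ M₀ : ℝ)
    (hΛ : Λ = Lam ψ ψs φ φs) (hΓ : Γ = Gam h k τ ψ ψs φ φs x y)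
    (hm₀ : m₀ = mInit h k τ v x y)
    (hm₀pos : 0 < m₀) (hm₀M₀ : m₀ ≤ M₀)
    (σ : ℝ) (hσ : σ = min τ ((M₀ - m₀) / (4 * Λ * M₀)))
    (R : Fin N) (hRk : k ≤ (R : ℕ)) (hRM : ⟪x R 0, v⟫ = M₀) (δ₁ : ℝ)
    (hδ₁ : δ₁ = (1 / (2 * ((N : ℝ) - 1))) * (Γ / Λ) * (1 - Real.exp (-(Λ * σ))) * (M₀ / m₀ - 1))
    :
    ∀ t ∈ Icc (5 * τ) (6 * τ),
      (∀ i : Fin N, m₀ * (1 + (1 / (((M : ℝ) - 1) * ((N : ℝ) + h - 1) * ((M : ℝ) + k - 1))) * (Γ / Λ) ^ 3 * δ₁ *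
        Real.exp (-(6 * τ * Λ)) * (1 - Real.exp (-(Λ * τ))) ^ 3) ≤ ⟪x i t, v⟫) ∧
      (∀ j : Fin M, m₀ * (1 + (1 / (((M : ℝ) - 1) * ((N : ℝ) + h - 1) * ((M : ℝ) + k - 1))) * (Γ / Λ) ^ 3 * δ₁ *
        Real.exp (-(6 * τ * Λ)) * (1 - Real.exp (-(Λ * τ))) ^ 3) ≤ ⟪y j t, v⟫) := by
  have H := hsol.isConfinedSol hτ.le hψ hψs hφ hφs v
  rw [← hΛ, ← hΓ, ← hm₀] at H
  have hΛ₀ : 0 < Λ := hΛ ▸ Lam_pos hψ hψs hφ hφs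
  have hΓ₀ : 0 ≤ Γ := hΓ ▸ Gam_nonneg hψ hψs hφ hφs
  have hΓΛ : Γ ≤ Λ := hΓ ▸ hΛ ▸ Gam_le_Lam hψ hψs hφ hφs
  have hM₀ : 0 < M₀ := hm₀pos.trans_le hm₀M₀
  have hσ₀ : 0 ≤ σ := hσ ▸ le_min hτ.le (div_nonneg (sub_nonneg.2 hm₀M₀) (by positivity))
  intro t ht
  convert H.ge_of_extremal_follower hΛ₀ hΓ₀ hΓΛ hτ hN hk1 hkN hh1 hhM hRk (hRM ▸ hm₀M₀) hσ₀
    (hσ ▸ min_le_left _ _) (hσ ▸ mul_min_div_le_half hΛ₀ hm₀pos hm₀M₀) ht using 3 <;>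
  · rw [hδ₁, hRM]
    field_simp

theorem stmt11
    (d N M h k : ℕ) (hd : 1 ≤ d) (hN : 2 ≤ N) (hM2 : 2 ≤ M) (hMN : M ≤ N)
    (hh1 : 1 ≤ h) (hhM : h < M) (hk1 : 1 ≤ k) (hkN : k < N)
    (τ : ℝ) (hτ : 0 < τ)
    (ψ ψs φ φs : EuclideanSpace ℝ (Fin d) → EuclideanSpace ℝ (Fin d) → ℝ)
    (hψ : Admissible ψ) (hψs : Admissible ψs) (hφ : Admissible φ) (hφs : Admissible φs)
    (x : Fin N → ℝ → EuclideanSpace ℝ (Fin d)) (y : Fin M → ℝ → EuclideanSpace ℝ (Fin d))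
    (hsol : IsSol h k τ ψ ψs φ φs x y)
    (v : EuclideanSpace ℝ (Fin d)) (Λ Γ m₀ M₀ : ℝ)
    (hΛ : Λ = Lam ψ ψs φ φs) (hΓ : Γ = Gam h k τ ψ ψs φ φs x y)
    (hm₀ : m₀ = mInit h k τ v x y) (hM₀ : M₀ = MInit h k τ v x y)
    (hm₀pos : 0 < m₀) (hm₀M₀ : m₀ ≤ M₀)
    (σ : ℝ) (hσ : σ = min τ ((M₀ - m₀) / (4 * Λ * M₀)))
    (R : Fin N) (hRk : k ≤ (R : ℕ)) (hRM : ⟪x R 0, v⟫ = M₀) (δ₁ : ℝ)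
    (hδ₁ : δ₁ = (1 / (2 * ((N : ℝ) - 1))) * (Γ / Λ) * (1 - Real.exp (-(Λ * σ))) * (M₀ / m₀ - 1))
    :
    ∀ t ∈ Icc (5 * τ) (6 * τ),
      (∀ i : Fin N, m₀ * (1 + (1 / (((M : ℝ) - 1) * ((N : ℝ) + h - 1) * ((M : ℝ) + k - 1))) * (Γ / Λ) ^ 3 * δ₁ *
        Real.exp (-(6 * τ * Λ)) * (1 - Real.exp (-(Λ * τ))) ^ 3) ≤ ⟪x i t, v⟫) ∧
      (∀ j : Fin M, m₀ * (1 + (1 / (((M : ℝ) - 1) * ((N : ℝ) + h - 1) * ((M : ℝ) + k - 1))) * (Γ / Λ) ^ 3 * δ₁ *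
        Real.exp (-(6 * τ * Λ)) * (1 - Real.exp (-(Λ * τ))) ^ 3) ≤ ⟪y j t, v⟫) :=
  stmt11_general d N M h k hN hh1 hhM hk1 hkN τ hτ ψ ψs φ φs hψ hψs hφ hφs x y hsol v Λ Γ m₀ M₀ hΛ
    hΓ hm₀ hm₀pos hm₀M₀ σ hσ R hRk hRM δ₁ hδ₁
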